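/- Let K ≥ 1 be an integer, let V be the disjoint union of sets A_1, ..., A_K each of size K (so |V| = n = K²), define c(S) = max_{1≤k≤K} |S ∩ A_k| for S ⊆ V, and let p_i = 1/K for every i ∈ V. Then: (a) c is non-decreasing and subadditive, i.e., c(S∪T) ≤ c(S) + c(T) for all S, T ⊆ V; (b) the uniform distribution on {A_1, ..., A_K} (each with probability 1/K) has marginals {1/K}, and under it E[c(S)] = K; hence the worst-case expected value satisfies L(c,V,{1/K}) ≥ K = √n. -/

import Mathlib

/-!
Every element lies in exactly one part `A k`, so the uniform mixture of the parts has all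
marginals `1/K`; each part meets itself in `K` elements, so `c = K` on the support of this
mixture. Its expectation `K` is one of the values whose supremum is `L`, and that set of values
is bounded because `c` takes finitely many values.
-/

open Finset

variable {W : Type*} [Fintype W] [DecidableEq W]

/-- Expected value of `f` under a distribution `α` on subsets of the ground set. -/
noncomputable def expVal (α : Finset W → ℝ) (f : Finset W → ℝ) : ℝ :=
  ∑ S : Finset W, α S * f S

/-- `α` is a probability distribution on subsets of the ground set with marginals `p`. -/
def IsDistWithMarginals (p : W → ℝ) (α : Finset W → ℝ) : Prop :=
  (∀ S, 0 ≤ α S) ∧ (∑ S : Finset W, α S = 1) ∧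
    (∀ i : W, ∑ S ∈ Finset.univ.filter (fun S => i ∈ S), α S = p i)

/-- The worst-case expected value `L(f,V,{p_i})`: supremum of the expected value of `f`
over all distributions with marginals `p`. -/
noncomputable def worstVal (p : W → ℝ) (f : Finset W → ℝ) : ℝ :=
  sSup {v | ∃ α, IsDistWithMarginals p α ∧ v = expVal α f}

/-- The expected value `I(f,V,{p_i})` of `f` when each element is included
independently with probability `p i`. -/
noncomputable def indepVal (p : W → ℝ) (f : Finset W → ℝ) : ℝ :=
  ∑ S : Finset W, (∏ i ∈ S, p i) * (∏ i ∈ Sᶜ, (1 - p i)) * f S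

/-- `χ` is an `(η,β)`-cost-sharing scheme for `f`.  An ordering of a subset `S` of the ground
set is encoded as a duplicate-free list `l` with `l.toFinset = S`; the restriction of the
ordering `l` to a subset `s` is `l.filter (· ∈ s)`.  The three conditions are:
`β`-budget balance, cross-monotonicity, and weak `η`-summability (the sum over `ℓ` of the
share of the `ℓ`-th element in the set of the first `ℓ` elements is at most `η·f(S)`). -/
def IsCostShare (f : Finset W → ℝ) (η β : ℝ) (χ : List W → W → ℝ) : Prop :=
  (∀ l : List W, l ≠ [] → l.Nodup →
      ∑ i ∈ l.toFinset, χ l i ≤ f l.toFinset ∧ f l.toFinset / β ≤ ∑ i ∈ l.toFinset, χ l i) ∧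
  (∀ l : List W, l.Nodup → ∀ s : Finset W, s ⊆ l.toFinset → ∀ i ∈ s,
      χ l i ≤ χ (l.filter (fun a => a ∈ s)) i) ∧
  (∀ l : List W, l ≠ [] → l.Nodup →
      ∑ ℓ : Fin l.length, χ (l.take (ℓ.1 + 1)) (l.get ℓ) ≤ η * f l.toFinset)

section MaxInterCard

variable {V ι : Type*} [DecidableEq V] [Fintype ι]

def maxInterCard (A : ι → Finset V) (S : Finset V) : ℕ :=
  univ.sup fun k => #(S ∩ A k)

theorem maxInterCard_mono (A : ι → Finset V) : Monotone (maxInterCard A) :=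
  fun _ _ hST => sup_mono_fun fun _ _ => card_le_card (inter_subset_inter_right hST)

theorem maxInterCard_union_le (A : ι → Finset V) (S T : Finset V) :
    maxInterCard A (S ∪ T) ≤ maxInterCard A S + maxInterCard A T := by
  refine Finset.sup_le fun k hk => ?_
  calc #((S ∪ T) ∩ A k) = #((S ∩ A k) ∪ (T ∩ A k)) := by rw [union_inter_distrib_right]
    _ ≤ #(S ∩ A k) + #(T ∩ A k) := card_union_le _ _
    _ ≤ maxInterCard A S + maxInterCard A T :=
      add_le_add (le_sup (f := fun k => #(S ∩ A k)) hk) (le_sup (f := fun k => #(T ∩ A k)) hk)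

theorem maxInterCard_self_of_card_eq {A : ι → Finset V} {m : ℕ} (hA : ∀ k, #(A k) = m)
    (k : ι) : maxInterCard A (A k) = m :=
  le_antisymm (Finset.sup_le fun j _ => (card_le_card inter_subset_right).trans (hA j).le) <| by
    have := le_sup (f := fun j => #(A k ∩ A j)) (mem_univ k)
    rwa [inter_self, hA k] at this

end MaxInterCard

section Mixture

variable {ι : Type*} [Fintype ι] {A : ι → Finset W} {w : ι → ℝ} {α : Finset W → ℝ}

theorem expVal_of_mixture (hα : ∀ S, α S = ∑ k, w k * if S = A k then 1 else 0)
    (f : Finset W → ℝ) : expVal α f = ∑ k, w k * f (A k) := by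
  simp only [expVal, hα, sum_mul, mul_assoc, ite_mul, one_mul, zero_mul]
  rw [sum_comm]
  simp

theorem isDistWithMarginals_of_mixture (hα : ∀ S, α S = ∑ k, w k * if S = A k then 1 else 0)
    (hw : ∀ k, 0 ≤ w k) (hw_sum : ∑ k, w k = 1) :
    IsDistWithMarginals (fun i => ∑ k, w k * if i ∈ A k then 1 else 0) α := by
  refine ⟨fun S => ?_, ?_, fun i => ?_⟩
  · rw [hα]
    exact sum_nonneg fun k _ => mul_nonneg (hw k) (by split_ifs <;> norm_num)
  · simpa [expVal, hw_sum] using expVal_of_mixture hα fun _ => 1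
  · simpa [expVal, sum_filter] using expVal_of_mixture hα fun S => if i ∈ S then 1 else 0

end Mixture

theorem expVal_le_worstVal {p : W → ℝ} {α : Finset W → ℝ} (hα : IsDistWithMarginals p α)
    (f : Finset W → ℝ) : expVal α f ≤ worstVal p f := by
  obtain ⟨M, hM⟩ := (Set.finite_range f).bddAbove
  refine le_csSup ⟨M, ?_⟩ ⟨α, hα, rfl⟩
  rintro _ ⟨β, ⟨hβ_nonneg, hβ_sum, -⟩, rfl⟩
  calc expVal β f ≤ ∑ S, β S * M :=
        sum_le_sum fun S _ => mul_le_mul_of_nonneg_left (hM ⟨S, rfl⟩) (hβ_nonneg S)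
    _ = M := by rw [← sum_mul, hβ_sum, one_mul]

/-- Example 2 (worst-case part): on `V = A_1 ⊔ ⋯ ⊔ A_K` with `|A_k| = K` (so
`n = |V| = K²`), the function `c(S) = max_k |S ∩ A_k|` is non-decreasing and
subadditive; the uniform distribution on `{A_1, …, A_K}` has marginals `1/K` and gives
expected value `K`; hence `L(c,V,{1/K}) ≥ K = √n`. -/
theorem subadditive_worst_case_lower_bound
    (K : ℕ) (hK : 1 ≤ K)
    (A : Fin K → Finset (Fin K × Fin K))
    (hA : ∀ k : Fin K, A k = Finset.univ.filter (fun x : Fin K × Fin K => x.1 = k))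
    (c : Finset (Fin K × Fin K) → ℝ)
    (hc : ∀ S, c S = ((Finset.univ.sup (fun k : Fin K => (S ∩ A k).card) : ℕ) : ℝ))
    (α : Finset (Fin K × Fin K) → ℝ)
    (hα : ∀ S, α S = ∑ k : Fin K, (1 / (K : ℝ)) * (if S = A k then 1 else 0)) :
    -- (a) non-decreasing and subadditive
    (∀ S T : Finset (Fin K × Fin K), S ⊆ T → c S ≤ c T)
    ∧ (∀ S T : Finset (Fin K × Fin K), c (S ∪ T) ≤ c S + c T)
    -- (b) the uniform distribution on the parts has marginals 1/K, expected value K,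
    -- and hence L ≥ K = √n
    ∧ IsDistWithMarginals (fun _ : Fin K × Fin K => 1 / (K : ℝ)) α
    ∧ expVal α c = K
    ∧ (K : ℝ) ≤ worstVal (fun _ : Fin K × Fin K => 1 / (K : ℝ)) c
    ∧ Real.sqrt (Fintype.card (Fin K × Fin K)) = K := by
  have hK₀ : (K : ℝ) ≠ 0 := Nat.cast_ne_zero.mpr (by omega)
  have hmem : ∀ x k, x ∈ A k ↔ x.1 = k := fun x k => by simp [hA]
  have hcard : ∀ k, #(A k) = K := fun k => by
    rw [hA, ← univ_product_univ, filter_product_left (· = k)]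
    simp [filter_eq']
  obtain rfl : c = fun S => (maxInterCard A S : ℝ) := funext hc
  have hdist : IsDistWithMarginals (fun _ => 1 / (K : ℝ)) α := by
    convert isDistWithMarginals_of_mixture hα (fun _ => by positivity) (by simp [hK₀]) using 2
    simp [hmem]
  have hexp : expVal α (fun S => (maxInterCard A S : ℝ)) = K := by
    simp [expVal_of_mixture hα, maxInterCard_self_of_card_eq hcard, hK₀]
  refine ⟨fun S T hST => ?_, fun S T => ?_, hdist, hexp,
    hexp.ge.trans (expVal_le_worstVal hdist _), ?_⟩
  · exact Nat.cast_le.mpr (maxInterCard_mono A hST)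
  · dsimp only
    exact_mod_cast maxInterCard_union_le A S T
  · simp
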